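/- arXiv:1808.05251 — 4 statements merged into one kernel-verified Lean document; each statement's English description precedes it below -/
import Mathlib

section
/- A reverse standard Young tableau S of shape τ is uniquely determined by its content vector (c(1,S), …, c(N,S)), where c(i,S) = col(i,S) - row(i,S): if two RSYT of the same shape τ have equal content vectors, they are equal. -/
/-- `S` is a reverse standard Young tableau of the shape `τ` (rows/columns 0-indexed),
recorded as the map sending each entry `i ∈ {1,…,N}` to its cell `(row, col)`:
entries strictly decrease along each row and down each column. -/
def IsRSYT (τ : ℕ → ℕ) (N : ℕ) (S : ℕ → ℕ × ℕ) : Prop :=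
  Set.BijOn S (Set.Icc 1 N) {p : ℕ × ℕ | p.2 < τ p.1} ∧
  (∀ i ∈ Set.Icc 1 N, ∀ j ∈ Set.Icc 1 N,
    (S i).1 = (S j).1 → (S i).2 < (S j).2 → j < i) ∧
  (∀ i ∈ Set.Icc 1 N, ∀ j ∈ Set.Icc 1 N,
    (S i).2 = (S j).2 → (S i).1 < (S j).1 → j < i)

/-- The content of the entry `i` in the tableau `S`. -/
def content (S : ℕ → ℕ × ℕ) (i : ℕ) : ℤ := ((S i).2 : ℤ) - (S i).1

/-!
Descending induction on the entry `i`: suppose all entries larger than `i` sit in the same cells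
of `S` and `S'`, but `i` does not. Equal contents put the two cells of `i` on one diagonal, say
the cell in `S` strictly up-left of the cell `(r, c)` in `S'`. Then `c ≥ 1`, and in `S'` the cell
`(r, c - 1)` holds some `j > i`, so `j` occupies that cell in `S` too; there it lies weakly
below-right of the cell of `i`, which in a reverse tableau of a Young-diagram shape forces `j < i`.
-/

namespace IsRSYT

variable {τ : ℕ → ℕ} {N : ℕ} {S : ℕ → ℕ × ℕ}

lemma le_of_same_row (hS : IsRSYT τ N S) {i j : ℕ} (hi : i ∈ Set.Icc 1 N)
    (hj : j ∈ Set.Icc 1 N) (hrow : (S i).1 = (S j).1) (hcol : (S i).2 ≤ (S j).2) : j ≤ i := by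
  rcases hcol.lt_or_eq with hcol | hcol
  · exact (hS.2.1 i hi j hj hrow hcol).le
  · exact (hS.1.injOn hj hi (Prod.ext hrow.symm hcol.symm)).le

lemma le_of_same_col (hS : IsRSYT τ N S) {i j : ℕ} (hi : i ∈ Set.Icc 1 N)
    (hj : j ∈ Set.Icc 1 N) (hcol : (S i).2 = (S j).2) (hrow : (S i).1 ≤ (S j).1) : j ≤ i := by
  rcases hrow.lt_or_eq with hrow | hrow
  · exact (hS.2.2 i hi j hj hcol hrow).le
  · exact (hS.1.injOn hj hi (Prod.ext hrow.symm hcol.symm)).le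

lemma lt_of_cell_lt (hτ : Antitone τ) (hS : IsRSYT τ N S) {k m : ℕ} (hk : k ∈ Set.Icc 1 N)
    (hm : m ∈ Set.Icc 1 N) (hmk : S m < S k) : k < m := by
  obtain ⟨hrow, hcol⟩ := Prod.le_def.mp hmk.le
  have hcorner : ((S m).1, (S k).2) ∈ {p : ℕ × ℕ | p.2 < τ p.1} :=
    (hS.1.mapsTo hk : (S k).2 < τ (S k).1).trans_le (hτ hrow)
  obtain ⟨l, hl, hSl⟩ := hS.1.surjOn hcorner
  have hkl : k ≤ l := hS.le_of_same_col hl hk (by rw [hSl]) (by rw [hSl]; exact hrow)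
  have hlm : l ≤ m := hS.le_of_same_row hm hl (by rw [hSl]) (by rw [hSl]; exact hcol)
  exact (hkl.trans hlm).lt_of_ne (by rintro rfl; exact hmk.ne rfl)

variable {S' : ℕ → ℕ × ℕ}

lemma fst_le_of_content_eq (hτ : Antitone τ) (hS : IsRSYT τ N S) (hS' : IsRSYT τ N S')
    {i : ℕ} (hi : i ∈ Set.Icc 1 N) (hgt : ∀ j ∈ Set.Icc 1 N, i < j → S j = S' j)
    (hc : content S i = content S' i) : (S' i).1 ≤ (S i).1 := by
  by_contra! hrow
  have hcol : (S i).2 < (S' i).2 := by unfold content at hc; omega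
  have hleft : ((S' i).1, (S' i).2 - 1) ∈ {p : ℕ × ℕ | p.2 < τ p.1} := by
    have : (S' i).2 < τ (S' i).1 := hS'.1.mapsTo hi
    show (S' i).2 - 1 < τ (S' i).1
    omega
  obtain ⟨j, hj, hS'j⟩ := hS'.1.surjOn hleft
  have hij : i < j := hS'.2.1 j hj i hi (by rw [hS'j]) (by rw [hS'j]; omega)
  have hSj : S j = ((S' i).1, (S' i).2 - 1) := by rw [hgt j hj hij, hS'j]
  have hcell : S i < S j := by
    rw [hSj]
    exact Prod.lt_iff.mpr (Or.inl ⟨hrow, by dsimp only; omega⟩)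
  exact (hS.lt_of_cell_lt hτ hj hi hcell).not_gt hij

lemma eq_of_content_eq_of_forall_gt (hτ : Antitone τ) (hS : IsRSYT τ N S)
    (hS' : IsRSYT τ N S') {i : ℕ} (hi : i ∈ Set.Icc 1 N)
    (hgt : ∀ j ∈ Set.Icc 1 N, i < j → S j = S' j) (hc : content S i = content S' i) :
    S i = S' i := by
  have hrow : (S i).1 = (S' i).1 :=
    le_antisymm (hS'.fst_le_of_content_eq hτ hS hi (fun j hj hij ↦ (hgt j hj hij).symm) hc.symm)
      (hS.fst_le_of_content_eq hτ hS' hi hgt hc)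
  have hcol : (S i).2 = (S' i).2 := by unfold content at hc; omega
  exact Prod.ext hrow hcol

end IsRSYT

/-- An RSYT is uniquely determined by its content vector. -/
theorem rsyt_determined_by_content (τ : ℕ → ℕ) (hτ : Antitone τ) (N : ℕ)
    (S S' : ℕ → ℕ × ℕ) (hS : IsRSYT τ N S) (hS' : IsRSYT τ N S')
    (hc : ∀ i ∈ Set.Icc 1 N, content S i = content S' i) :
    ∀ i ∈ Set.Icc 1 N, S i = S' i := by
  intro i
  induction i using Nat.strong_decreasing_induction with
  | base => exact ⟨N, fun m hm hmN ↦ absurd hmN.2 hm.not_ge⟩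
  | step i ih =>
    exact fun hi ↦
      hS.eq_of_content_eq_of_forall_gt hτ hS' hi (fun j hj hij ↦ ih j hij hj) (hc i hi)
end

section
/- If S is an RSYT of shape τ with c(i,S) - c(i+1,S) ≥ 2 (i.e., row(i,S) < row(i+1,S) and col(i,S) > col(i+1,S)), then the tableau S^{(i)} obtained by exchanging the entries i and i+1 is again a reverse standard Young tableau of shape τ, and inv(S^{(i)}) = inv(S) - 1. -/
/-- The inversion number of a tableau. -/
noncomputable def invT (N : ℕ) (S : ℕ → ℕ × ℕ) : ℕ :=
  (((Finset.Icc 1 N) ×ˢ (Finset.Icc 1 N)).filter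
    (fun p => p.1 < p.2 ∧ content S p.2 + 2 ≤ content S p.1)).card

/-!
If `c(i) - c(i+1) ≥ 2`, then `i` and `i + 1` lie in different rows and different columns:
otherwise the cell just right of `i + 1` in their common row (resp. just below `i` in their
common column) lies in the shape, and its entry would lie strictly between `i` and `i + 1`.
Hence exchanging them keeps rows and columns decreasing. The map `(a, b) ↦ (σ a, σ b)`, with
`σ` the transposition of `i` and `i + 1`, matches the inversions of `S ∘ σ` with those of `S`
other than `(i, i + 1)`, since `σ` preserves the order of every other pair.
-/

open Equiv

lemma swap_succ_lt_swap_succ_or (i : ℕ) {a b : ℕ} (h : a < b) :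
    swap i (i + 1) a < swap i (i + 1) b ∨ (a = i ∧ b = i + 1) := by
  rw [swap_apply_def, swap_apply_def]
  split_ifs <;> omega

lemma forall_lt_of_comp_swap_succ {α : Type*} {s : Set ℕ} {S : ℕ → α} {R : α → α → Prop}
    {i : ℕ} (hi : i ∈ s) (hi' : i + 1 ∈ s) (hR : ∀ a ∈ s, ∀ b ∈ s, R (S a) (S b) → b < a)
    (hRi : ¬ R (S (i + 1)) (S i)) :
    ∀ a ∈ s, ∀ b ∈ s, R ((S ∘ swap i (i + 1)) a) ((S ∘ swap i (i + 1)) b) → b < a := by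
  intro a ha b hb hab
  have hσ := (bijOn_swap hi hi').mapsTo
  have hlt := hR _ (hσ ha) _ (hσ hb) hab
  rcases swap_succ_lt_swap_succ_or i hlt with hlt | ⟨hb', ha'⟩
  · simpa only [swap_apply_self] using hlt
  · rw [swap_apply_eq_iff, swap_apply_left] at hb'
    rw [swap_apply_eq_iff, swap_apply_right] at ha'
    subst ha' hb'
    exact absurd hab (by simpa only [Function.comp_apply, swap_apply_left, swap_apply_right])

namespace IsRSYT

variable {τ : ℕ → ℕ} {N : ℕ} {S : ℕ → ℕ × ℕ} {i : ℕ}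

lemma comp_swap_succ (hS : IsRSYT τ N S) (hi : i ∈ Set.Icc 1 N) (hi' : i + 1 ∈ Set.Icc 1 N)
    (hrow : (S i).1 ≠ (S (i + 1)).1) (hcol : (S i).2 ≠ (S (i + 1)).2) :
    IsRSYT τ N (S ∘ swap i (i + 1)) := by
  obtain ⟨hbij, hrows, hcols⟩ := hS
  refine ⟨hbij.comp (bijOn_swap hi hi'), ?_, ?_⟩
  · have := forall_lt_of_comp_swap_succ (R := fun p q : ℕ × ℕ => p.1 = q.1 ∧ p.2 < q.2) hi hi'
      (fun a ha b hb h => hrows a ha b hb h.1 h.2) (fun h => hrow h.1.symm)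
    exact fun a ha b hb h h' => this a ha b hb ⟨h, h'⟩
  · have := forall_lt_of_comp_swap_succ (R := fun p q : ℕ × ℕ => p.2 = q.2 ∧ p.1 < q.1) hi hi'
      (fun a ha b hb h => hcols a ha b hb h.1 h.2) (fun h => hcol h.1.symm)
    exact fun a ha b hb h h' => this a ha b hb ⟨h, h'⟩

lemma fst_ne_of_two_le_content_sub (hS : IsRSYT τ N S) (hi : i ∈ Set.Icc 1 N)
    (hi' : i + 1 ∈ Set.Icc 1 N) (hc : 2 ≤ content S i - content S (i + 1)) :
    (S i).1 ≠ (S (i + 1)).1 := by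
  intro hrow
  have hgap : (S (i + 1)).2 + 1 < (S i).2 := by simp only [content] at hc; omega
  have hcell : ((S i).1, (S (i + 1)).2 + 1) ∈ {p : ℕ × ℕ | p.2 < τ p.1} :=
    hgap.trans (hS.1.mapsTo hi)
  obtain ⟨k, hk, hSk⟩ := hS.1.surjOn hcell
  have hik : i < k := hS.2.1 k hk i hi (by rw [hSk]) (by rw [hSk]; exact hgap)
  have hki : k < i + 1 := hS.2.1 (i + 1) hi' k hk (by rw [hSk, hrow]) (by rw [hSk]; omega)
  omega

lemma snd_ne_of_two_le_content_sub (hS : IsRSYT τ N S) (hτ : Antitone τ)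
    (hi : i ∈ Set.Icc 1 N) (hi' : i + 1 ∈ Set.Icc 1 N)
    (hc : 2 ≤ content S i - content S (i + 1)) :
    (S i).2 ≠ (S (i + 1)).2 := by
  intro hcol
  have hgap : (S i).1 + 1 < (S (i + 1)).1 := by simp only [content] at hc; omega
  have hcell : ((S i).1 + 1, (S i).2) ∈ {p : ℕ × ℕ | p.2 < τ p.1} :=
    calc (S i).2 = (S (i + 1)).2 := hcol
      _ < τ (S (i + 1)).1 := hS.1.mapsTo hi'
      _ ≤ τ ((S i).1 + 1) := hτ hgap.le
  obtain ⟨k, hk, hSk⟩ := hS.1.surjOn hcell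
  have hki : k < i := hS.2.2 i hi k hk (by rw [hSk]) (by rw [hSk]; omega)
  have hik : i + 1 < k := hS.2.2 k hk (i + 1) hi' (by rw [hSk, hcol]) (by rw [hSk]; exact hgap)
  omega

end IsRSYT

lemma invT_comp_swap_succ {N i : ℕ} {S : ℕ → ℕ × ℕ} (hi : i ∈ Set.Icc 1 N)
    (hi' : i + 1 ∈ Set.Icc 1 N) (hc : 2 ≤ content S i - content S (i + 1)) :
    invT N (S ∘ swap i (i + 1)) = invT N S - 1 := by
  set σ := swap i (i + 1)
  have hσ := (bijOn_swap hi hi').mapsTo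
  have hmem : (i, i + 1) ∈ ((Finset.Icc 1 N) ×ˢ (Finset.Icc 1 N)).filter
      (fun p => p.1 < p.2 ∧ content S p.2 + 2 ≤ content S p.1) := by
    simp only [Finset.mem_filter, Finset.mem_product, Finset.mem_Icc]
    exact ⟨⟨hi, hi'⟩, by omega, by omega⟩
  unfold invT
  rw [← Finset.card_erase_of_mem hmem]
  refine Finset.card_nbij' (fun p => (σ p.1, σ p.2)) (fun p => (σ p.1, σ p.2)) ?_ ?_
    (fun _ _ => by simp only [σ, swap_apply_self]) (fun _ _ => by simp only [σ, swap_apply_self])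
  · rintro ⟨a, b⟩ hab
    simp only [Finset.coe_filter, Finset.mem_product, Finset.mem_Icc, Set.mem_ofPred_eq,
      Finset.coe_erase, Set.mem_sdiff, Set.mem_singleton_iff, Prod.mk.injEq] at hab ⊢
    obtain ⟨⟨ha, hb⟩, hlt, hinv⟩ := hab
    have hlt' : σ a < σ b := by
      rcases swap_succ_lt_swap_succ_or i hlt with hlt' | ⟨rfl, rfl⟩
      · exact hlt'
      · simp only [content, Function.comp_apply, σ, swap_apply_left, swap_apply_right] at hinv hc
        omega
    refine ⟨⟨⟨hσ ha, hσ hb⟩, hlt', hinv⟩, fun ⟨ha', hb'⟩ => ?_⟩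
    rw [swap_apply_eq_iff, swap_apply_left] at ha'
    rw [swap_apply_eq_iff, swap_apply_right] at hb'
    omega
  · rintro ⟨a, b⟩ hab
    simp only [Finset.coe_filter, Finset.mem_product, Finset.mem_Icc, Set.mem_ofPred_eq,
      Finset.coe_erase, Set.mem_sdiff, Set.mem_singleton_iff, Prod.mk.injEq] at hab ⊢
    obtain ⟨⟨⟨ha, hb⟩, hlt, hinv⟩, hne⟩ := hab
    refine ⟨⟨hσ ha, hσ hb⟩, ?_, by simpa only [content, Function.comp_apply, σ, swap_apply_self]⟩
    exact (swap_succ_lt_swap_succ_or i hlt).resolve_right hne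

/-- If `c(i,S) - c(i+1,S) ≥ 2` then exchanging the entries `i` and `i+1` yields
an RSYT, with inversion number one less. -/
theorem rsyt_swap (τ : ℕ → ℕ) (hτ : Antitone τ) (N : ℕ)
    (S : ℕ → ℕ × ℕ) (hS : IsRSYT τ N S) (i : ℕ) (h1 : 1 ≤ i) (h2 : i < N)
    (hc : 2 ≤ content S i - content S (i + 1)) :
    IsRSYT τ N (S ∘ Equiv.swap i (i + 1)) ∧
      invT N (S ∘ Equiv.swap i (i + 1)) = invT N S - 1 := by
  have hi : i ∈ Set.Icc 1 N := ⟨h1, h2.le⟩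
  have hi' : i + 1 ∈ Set.Icc 1 N := ⟨by omega, h2⟩
  exact ⟨hS.comp_swap_succ hi hi' (hS.fst_ne_of_two_le_content_sub hi hi' hc)
      (hS.snd_ne_of_two_le_content_sub hτ hi hi' hc),
    invT_comp_swap_succ hi hi' hc⟩
end

section
/- For α ∈ ℕ₀^N with α_i < α_{i+1}, the ratio of the products E(α)/E(α.s_i) equals u(q^{α_{i+1} - α_i} t^{r_α(i) - r_α(i+1)}), where E(α) := ∏_{1 ≤ i < j ≤ N, α_i < α_j} u(q^{α_j - α_i} t^{r_α(i) - r_α(j)}), u(z) = (t - z)(1 - tz)/(1-z)^2, and r_α is the rank function. -/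
/-- Rank function of a composition (entries indexed `1,…,N`). -/
noncomputable def rankFn (N : ℕ) (α : ℕ → ℕ) (i : ℕ) : ℕ :=
  ((Finset.Icc 1 N).filter (fun j => α j > α i)).card
    + ((Finset.Icc 1 i).filter (fun j => α j = α i)).card

noncomputable def uFn {K : Type*} [Field K] (t z : K) : K :=
  (t - z) * (1 - t * z) / (1 - z) ^ 2

/-- `E(α) = ∏_{i<j, α_i<α_j} u(q^{α_j-α_i} t^{r_α(i)-r_α(j)})`. -/
noncomputable def EFn {K : Type*} [Field K] (q t : K) (N : ℕ) (α : ℕ → ℕ) : K :=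
  ∏ p ∈ ((Finset.Icc 1 N) ×ˢ (Finset.Icc 1 N)).filter
      (fun p => p.1 < p.2 ∧ α p.1 < α p.2),
    uFn t (q ^ (α p.2 - α p.1) * t ^ ((rankFn N α p.1 : ℤ) - rankFn N α p.2))

/-! The transposition `s_i` maps the pairs `(a, b)` with `a < b` and `α_a < α_b` for
`α.s_i` bijectively onto those for `α`, except `(i, i + 1)`; since `α_i ≠ α_{i+1}` it also
satisfies `r_{α.s_i} = r_α ∘ s_i`, so under this bijection the remaining factors of `E(α)`
and `E(α.s_i)` agree. -/

open Finset Equiv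

section AdjacentSwap

variable {i : ℕ}

theorem swap_succ_mem_Icc_iff {m n a : ℕ} (hm : m ≤ i) (hn : i < n) :
    swap i (i + 1) a ∈ Icc m n ↔ a ∈ Icc m n := by
  simp only [mem_Icc, swap_apply_def]
  split_ifs <;> omega

theorem le_swap_succ_iff {m a : ℕ} (hm : m ≤ i) : m ≤ swap i (i + 1) a ↔ m ≤ a := by
  rw [swap_apply_def]
  split_ifs <;> omega

theorem swap_succ_lt_swap_succ_iff {a b : ℕ} :
    swap i (i + 1) a < swap i (i + 1) b ↔
      a < b ∧ (a, b) ≠ (i, i + 1) ∨ (a, b) = (i + 1, i) := by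
  simp only [swap_apply_def, ne_eq, Prod.mk.injEq]
  split_ifs <;> omega

theorem swap_succ_le_iff_le_swap_succ {a b : ℕ} (h : a = b → a ≠ i ∧ a ≠ i + 1) :
    swap i (i + 1) a ≤ b ↔ a ≤ swap i (i + 1) b := by
  simp only [swap_apply_def]
  split_ifs <;> omega

end AdjacentSwap

def ascentPairs (N : ℕ) (α : ℕ → ℕ) : Finset (ℕ × ℕ) :=
  ((Icc 1 N) ×ˢ (Icc 1 N)).filter (fun p => p.1 < p.2 ∧ α p.1 < α p.2)

section Swap

variable {N i : ℕ} {α : ℕ → ℕ}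

theorem rankFn_comp_swap_succ (h1 : 1 ≤ i) (h2 : i < N) (hα : α i ≠ α (i + 1)) (j : ℕ) :
    rankFn N (α ∘ swap i (i + 1)) j = rankFn N α (swap i (i + 1) j) := by
  unfold rankFn
  congr 1
  all_goals
    rw [← card_map (swap i (i + 1)).toEmbedding]
    congr 1
    ext k
    rw [mem_map_equiv]
    simp only [mem_filter, symm_swap, Function.comp_apply, swap_apply_self]
  · rw [swap_succ_mem_Icc_iff h1 h2]
  · refine and_congr_left fun hk => ?_
    have hki : k = j → k ≠ i ∧ k ≠ i + 1 := by
      rintro rfl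
      constructor <;> rintro rfl <;> simp_all
    rw [mem_Icc, mem_Icc, le_swap_succ_iff h1, swap_succ_le_iff_le_swap_succ hki]

theorem map_ascentPairs_comp_swap_succ (h1 : 1 ≤ i) (h2 : i < N) (hα : α i < α (i + 1)) :
    (ascentPairs N (α ∘ swap i (i + 1))).map
        ((swap i (i + 1)).prodCongr (swap i (i + 1))).toEmbedding
      = (ascentPairs N α).erase (i, i + 1) := by
  ext ⟨a, b⟩
  simp only [ascentPairs, mem_map_equiv, mem_erase, mem_filter, mem_product, prodCongr_symm,
    symm_swap, prodCongr_apply, Prod.map, Function.comp_apply, swap_apply_self,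
    swap_succ_mem_Icc_iff h1 h2, swap_succ_lt_swap_succ_iff]
  have hba : (a, b) = (i + 1, i) → ¬α a < α b := by
    rw [Prod.mk.injEq]
    rintro ⟨rfl, rfl⟩
    exact hα.asymm
  tauto

end Swap

theorem E_ratio_general (K : Type*) [Field K] (q t : K)
    (N : ℕ) (α : ℕ → ℕ) (i : ℕ) (h1 : 1 ≤ i) (h2 : i < N) (hα : α i < α (i + 1)) :
    EFn q t N α
      = uFn t (q ^ (α (i + 1) - α i) * t ^ ((rankFn N α i : ℤ) - rankFn N α (i + 1)))
        * EFn q t N (α ∘ Equiv.swap i (i + 1)) := by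
  have hmem : (i, i + 1) ∈ ascentPairs N α := by
    simp only [ascentPairs, mem_filter, mem_product, mem_Icc]
    omega
  change ∏ p ∈ ascentPairs N α, _ = _ * ∏ p ∈ ascentPairs N _, _
  rw [← mul_prod_erase _ _ hmem, ← map_ascentPairs_comp_swap_succ h1 h2 hα, prod_map]
  congr 1
  refine prod_congr rfl fun p _ => ?_
  simp [rankFn_comp_swap_succ h1 h2 hα.ne]

/-- If `α_i < α_{i+1}` then `E(α) = u(q^{α_{i+1}-α_i} t^{r_α(i)-r_α(i+1)}) · E(α.s_i)`. -/
theorem E_ratio (K : Type*) [Field K] (q t : K) (ht : t ≠ 0)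
    (hgen : ∀ (a : ℕ) (b : ℤ), 1 ≤ a → q ^ a * t ^ b ≠ 1)
    (N : ℕ) (α : ℕ → ℕ) (i : ℕ) (h1 : 1 ≤ i) (h2 : i < N) (hα : α i < α (i + 1)) :
    EFn q t N α
      = uFn t (q ^ (α (i + 1) - α i) * t ^ ((rankFn N α i : ℤ) - rankFn N α (i + 1)))
        * EFn q t N (α ∘ Equiv.swap i (i + 1)) :=
  E_ratio_general K q t N α i h1 h2 hα
end

section
/- Let λ ∈ ℕ₀^N be a partition with λ_m ≥ 1 and λ_i = 0 for i > m, and set α = (λ_1,…,λ_{m-1},0,…,0,λ_m) (the λ_m moved to position N). Then E(α) = ∏_{i=m+1}^{N} u(q^{λ_m} t^{i-m}) = t^{N-m} · (1 - q^{λ_m})(1 - q^{λ_m} t^{N-m+1}) / ((1 - q^{λ_m} t)(1 - q^{λ_m} t^{N-m})). -/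
/-!
The only pairs `i < j` with `α_i < α_j` are `(i, N)` with `m ≤ i < N`: the head entries are weakly
decreasing and at least `λ_m`, the middle entries vanish. Their ranks are `r(i) = i + 1` and
`r(N) = m`, so `E(α) = ∏_{k=1}^{N-m} u(x t^k)` with `x = q^{λ_m}`. Since
`u(x t^k) = t (1 - x t^(k-1)) (1 - x t^(k+1)) / (1 - x t^k)^2`, this product telescopes.
-/

open Finset

theorem uFn_mul_pow_succ {K : Type*} [Field K] (t x : K) (k : ℕ) :
    uFn t (x * t ^ (k + 1)) =
      t * (1 - x * t ^ k) * (1 - x * t ^ (k + 2)) / (1 - x * t ^ (k + 1)) ^ 2 := by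
  rw [uFn]
  ring

theorem prod_range_uFn_mul_pow_succ {K : Type*} [Field K] (t x : K)
    (hx : ∀ b : ℕ, x * t ^ b ≠ 1) (n : ℕ) :
    ∏ k ∈ range n, uFn t (x * t ^ (k + 1)) =
      t ^ n * ((1 - x) * (1 - x * t ^ (n + 1))) / ((1 - x * t) * (1 - x * t ^ n)) := by
  have hne (b : ℕ) : 1 - x * t ^ b ≠ 0 := sub_ne_zero.mpr (hx b).symm
  have h0 : 1 - x ≠ 0 := by simpa using hne 0
  have h1 : 1 - x * t ≠ 0 := by simpa using hne 1
  induction n with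
  | zero => field_simp; ring
  | succ n ih =>
    rw [prod_range_succ, ih, uFn_mul_pow_succ, div_mul_div_comm,
      div_eq_div_iff (by simp [h1, hne]) (by simp [h1, hne])]
    ring

theorem prod_Icc_add_one_sub {M : Type*} [CommMonoid M] (f : ℕ → M) (m N : ℕ) :
    ∏ i ∈ Icc (m + 1) N, f (i - m) = ∏ k ∈ range (N - m), f (k + 1) := by
  rw [← Ico_add_one_right_eq_Icc, prod_Ico_eq_prod_range, Nat.add_sub_add_right]
  exact prod_congr rfl fun k _ => congrArg f (by omega)

theorem rankFn_eq_card_filter_le (N : ℕ) (α : ℕ → ℕ) :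
    rankFn N α N = #{j ∈ Icc 1 N | α N ≤ α j} := by
  rw [rankFn, ← card_union_of_disjoint (disjoint_filter.2 fun _ _ => ne_of_gt), ← filter_or]
  simp only [le_iff_lt_or_eq, eq_comm]

/-- `α = (α_1, …, α_{m-1}, 0, …, 0, a)` with `a ≤ α_i` for `i < m`. -/
structure LastPartMoved (N m a : ℕ) (α : ℕ → ℕ) : Prop where
  head : ∀ i, 1 ≤ i → i < m → a ≤ α i
  middle : ∀ i, m ≤ i → i < N → α i = 0
  last : α N = a

namespace LastPartMoved

variable {N m a : ℕ} {α : ℕ → ℕ}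

theorem filter_le_eq (h : LastPartMoved N m a α) (hm : 1 ≤ m) (hmN : m ≤ N) {b : ℕ}
    (hb : 1 ≤ b) (hba : b ≤ a) :
    {j ∈ Icc 1 N | b ≤ α j} = insert N (Ico 1 m) := by
  ext j
  simp only [mem_filter, mem_Icc, mem_insert, mem_Ico]
  constructor
  · rintro ⟨⟨hj1, hjN⟩, hbj⟩
    by_contra! hj
    have := h.middle j (by omega) (by omega)
    omega
  · rintro (rfl | ⟨hj1, hjm⟩)
    · exact ⟨⟨by omega, le_rfl⟩, by rwa [h.last]⟩
    · exact ⟨⟨hj1, by omega⟩, hba.trans (h.head j hj1 hjm)⟩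

theorem card_filter_le (h : LastPartMoved N m a α) (hm : 1 ≤ m) (hmN : m ≤ N) {b : ℕ}
    (hb : 1 ≤ b) (hba : b ≤ a) : #{j ∈ Icc 1 N | b ≤ α j} = m := by
  rw [h.filter_le_eq hm hmN hb hba, card_insert_of_notMem (by simp; omega), Nat.card_Ico]
  omega

theorem rankFn_last (h : LastPartMoved N m a α) (hm : 1 ≤ m) (hmN : m ≤ N) (ha : 1 ≤ a) :
    rankFn N α N = m := by
  rw [rankFn_eq_card_filter_le, h.last, h.card_filter_le hm hmN ha le_rfl]

theorem rankFn_of_mem_Ico (h : LastPartMoved N m a α) (hm : 1 ≤ m) (ha : 1 ≤ a) {i : ℕ}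
    (hi : i ∈ Ico m N) : rankFn N α i = i + 1 := by
  rw [mem_Ico] at hi
  have hzero : {j ∈ Icc 1 i | α j = α i} = Icc m i := by
    ext j
    simp only [mem_filter, mem_Icc, h.middle i hi.1 hi.2]
    constructor
    · rintro ⟨⟨hj1, hji⟩, hj⟩
      have hhead := h.head j hj1
      omega
    · rintro ⟨hmj, hji⟩
      exact ⟨⟨by omega, hji⟩, h.middle j hmj (by omega)⟩
  rw [rankFn, hzero, Nat.card_Icc, h.middle i hi.1 hi.2]
  rw [filter_congr (q := fun j => 1 ≤ α j) (fun j _ => by omega),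
    h.card_filter_le hm (by omega) le_rfl ha]
  omega

theorem filter_lt_and_lt_eq_image (h : LastPartMoved N m a α) (hm : 1 ≤ m) (hmN : m ≤ N) (ha : 1 ≤ a)
    (hanti : ∀ i j, 1 ≤ i → i ≤ j → j < m → α j ≤ α i) :
    {p ∈ Icc 1 N ×ˢ Icc 1 N | p.1 < p.2 ∧ α p.1 < α p.2} = (Ico m N).image (·, N) := by
  ext ⟨i, j⟩
  simp only [mem_filter, mem_product, mem_Icc, mem_image, mem_Ico, Prod.mk.injEq]
  constructor
  · rintro ⟨⟨⟨hi1, hiN⟩, hj1, hjN⟩, hij, hα⟩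
    have hj : j = N := by
      by_contra hjN'
      rcases lt_or_ge j m with hjm | hmj
      · have := hanti i j hi1 hij.le hjm
        omega
      · have := h.middle j hmj (by omega)
        omega
    subst hj
    rw [h.last] at hα
    have hmi : m ≤ i := by
      by_contra! him
      have := h.head i hi1 him
      omega
    exact ⟨i, ⟨hmi, hij⟩, rfl, rfl⟩
  · rintro ⟨i, ⟨hmi, hiN⟩, rfl, rfl⟩
    refine ⟨⟨⟨by omega, hiN.le⟩, by omega, le_rfl⟩, hiN, ?_⟩
    rw [h.middle i hmi hiN, h.last]
    omega

theorem EFn_eq {K : Type*} [Field K] (q t : K) (h : LastPartMoved N m a α) (hm : 1 ≤ m)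
    (hmN : m ≤ N) (ha : 1 ≤ a)
    (hanti : ∀ i j, 1 ≤ i → i ≤ j → j < m → α j ≤ α i) :
    EFn q t N α = ∏ k ∈ range (N - m), uFn t (q ^ a * t ^ (k + 1)) := by
  rw [EFn, h.filter_lt_and_lt_eq_image hm hmN ha hanti,
    prod_image fun _ _ _ _ hij => (Prod.mk.inj hij).1, prod_Ico_eq_prod_range]
  refine prod_congr rfl fun k hk => ?_
  have hk : m + k ∈ Ico m N := by simp only [mem_Ico, mem_range] at hk ⊢; omega
  rw [h.last, h.middle _ (mem_Ico.1 hk).1 (mem_Ico.1 hk).2, Nat.sub_zero,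
    h.rankFn_of_mem_Ico hm ha hk, h.rankFn_last hm hmN ha,
    show ((m + k + 1 : ℕ) : ℤ) - m = ((k + 1 : ℕ) : ℤ) by push_cast; ring, zpow_natCast]

end LastPartMoved

theorem E_alpha_telescope_general (K : Type*) [Field K] (q t : K)
    (hgen : ∀ (a : ℕ) (b : ℤ), 1 ≤ a → q ^ a * t ^ b ≠ 1)
    (N m : ℕ) (h1 : 1 ≤ m) (h2 : m ≤ N) (l : ℕ → ℕ)
    (hdec : ∀ i j : ℕ, 1 ≤ i → i ≤ j → j ≤ N → l j ≤ l i)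
    (hm : 1 ≤ l m)
    (α : ℕ → ℕ)
    (hα : ∀ i : ℕ, α i = if i < m then l i else if i = N then l m else 0) :
    EFn q t N α = (∏ i ∈ Finset.Icc (m + 1) N, uFn t (q ^ l m * t ^ (i - m))) ∧
    EFn q t N α = t ^ (N - m) * ((1 - q ^ l m) * (1 - q ^ l m * t ^ (N - m + 1)))
        / ((1 - q ^ l m * t) * (1 - q ^ l m * t ^ (N - m))) := by
  have hshape : LastPartMoved N m (l m) α :=
    { head := fun i hi him => by rw [hα, if_pos him]; exact hdec i m hi him.le h2
      middle := fun i hmi hiN => by rw [hα, if_neg (by omega), if_neg (by omega)]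
      last := by rw [hα, if_neg (by omega), if_pos rfl] }
  have hanti (i j : ℕ) (hi : 1 ≤ i) (hij : i ≤ j) (hjm : j < m) : α j ≤ α i := by
    rw [hα, hα, if_pos hjm, if_pos (by omega)]
    exact hdec i j hi hij (by omega)
  have hE := hshape.EFn_eq q t h1 h2 hm hanti
  refine ⟨hE.trans (prod_Icc_add_one_sub (fun k => uFn t (q ^ l m * t ^ k)) m N).symm,
    hE.trans ?_⟩
  exact prod_range_uFn_mul_pow_succ t _ (fun b => by exact_mod_cast hgen (l m) b hm) (N - m)

/-- For a partition `λ` with last nonzero part `λ_m` and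
`α = (λ_1,…,λ_{m-1},0,…,0,λ_m)`, the product `E(α)` telescopes. -/
theorem E_alpha_telescope (K : Type*) [Field K] (q t : K) (ht : t ≠ 0)
    (hgen : ∀ (a : ℕ) (b : ℤ), 1 ≤ a → q ^ a * t ^ b ≠ 1)
    (N m : ℕ) (h1 : 1 ≤ m) (h2 : m ≤ N) (l : ℕ → ℕ)
    (hdec : ∀ i j : ℕ, 1 ≤ i → i ≤ j → j ≤ N → l j ≤ l i)
    (hm : 1 ≤ l m) (hzero : ∀ i : ℕ, m < i → l i = 0)
    (α : ℕ → ℕ)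
    (hα : ∀ i : ℕ, α i = if i < m then l i else if i = N then l m else 0) :
    EFn q t N α = (∏ i ∈ Finset.Icc (m + 1) N, uFn t (q ^ l m * t ^ (i - m))) ∧
    EFn q t N α = t ^ (N - m) * ((1 - q ^ l m) * (1 - q ^ l m * t ^ (N - m + 1)))
        / ((1 - q ^ l m * t) * (1 - q ^ l m * t ^ (N - m))) :=
  E_alpha_telescope_general K q t hgen N m h1 h2 l hdec hm α hα
end
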